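/- If model B is ergodic with unique invariant measure δ_{∘^ℤ} (i.e., νF_B^n converges weakly to δ_{∘^ℤ} for every probability measure ν on {∘,•}^ℤ), then the PCA F_A has (δ_{(01)^ℤ} + δ_{(10)^ℤ})/2 as its unique invariant probability measure. (Part of Lemma 4.3.) -/

import Mathlib

open MeasureTheory ProbabilityTheory Filter

/-!
Conventions: a configuration of model A is `x : ℤ → Bool` (`false` = 0, `true` = 1);
a configuration of model B is `y : ℤ → Bool` (`false` = ∘, `true` = •);
an update configuration is `u : ℤ → Bool` (`true` = ↑, `false` = →).
The space `ℤ → Bool` carries the product topology (with `Bool` discrete) and the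
product (Borel) σ-algebra.
-/

/-- The local map `𝒜` of model A. -/
def modelA (x u : ℤ → Bool) : ℤ → Bool := fun i =>
  if x (i - 1) = x i then xor (x i) (u i) else x (i - 1)

/-- The local map `ℬ` of model B: the `i`-th coordinate of `ℬ(y,u)` is `•` iff
`(y_{i-1}y_i, u_{i-1}u_i) ∈ {(•∘, →⋅), (∘•, ⋅↑), (••, ↑↑), (••, →→)}`. -/
def modelB (y u : ℤ → Bool) : ℤ → Bool := fun i =>
  match y (i - 1), y i with
  | true, false => !u (i - 1)
  | false, true => u i
  | true, true => u (i - 1) == u i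
  | false, false => false

/-- `lam` is the product over `ℤ` of the uniform measure on the two-element update
alphabet `𝒰`. -/
def IsUniformProduct (lam : Measure (ℤ → Bool)) : Prop :=
  IsProbabilityMeasure lam ∧
    ∀ (s : Finset ℤ) (f : ℤ → Bool),
      lam {u | ∀ i ∈ s, u i = f i} = (1 / 2 : ENNReal) ^ s.card

/-- `μ F_A`: the pushforward of `μ ⊗ lam` under `𝒜`. -/
noncomputable def FA (lam μ : Measure (ℤ → Bool)) : Measure (ℤ → Bool) :=
  Measure.map (fun p : (ℤ → Bool) × (ℤ → Bool) => modelA p.1 p.2) (μ.prod lam)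

/-- `ν F_B`: the pushforward of `ν ⊗ lam` under `ℬ`. -/
noncomputable def FB (lam ν : Measure (ℤ → Bool)) : Measure (ℤ → Bool) :=
  Measure.map (fun p : (ℤ → Bool) × (ℤ → Bool) => modelB p.1 p.2) (ν.prod lam)

/-- The empty configuration `∘^ℤ`. -/
def emptyConfig : ℤ → Bool := fun _ => false

/-- The configuration `(01)^ℤ`: `x_{2n} = 0`, `x_{2n+1} = 1`. -/
def conf01 : ℤ → Bool := fun i => decide (i % 2 = 1)

/-- The configuration `(10)^ℤ`: `x_{2n} = 1`, `x_{2n+1} = 0`. -/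
def conf10 : ℤ → Bool := fun i => decide (i % 2 = 0)


/-!
The defect map `x ↦ (x_{i-1} = x_i)_i` intertwines the two models: the defects of `𝒜(x, u)` are
`ℬ(defects x, u)`. So the defect image of an `F_A`-invariant measure is `F_B`-invariant, hence
equal to `δ_{∘^ℤ}` by ergodicity of model B: almost every configuration is defect-free, i.e. is
`(01)^ℤ` or `(10)^ℤ`. As `𝒜` swaps these two configurations, invariance forces equal masses `1/2`.
-/

def defects (x : ℤ → Bool) : ℤ → Bool := fun i => x (i - 1) == x i

lemma defects_modelA (x u : ℤ → Bool) : defects (modelA x u) = modelB (defects x) u := by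
  funext i
  simp only [defects, modelA, modelB]
  cases x (i - 1 - 1) <;> cases x (i - 1) <;> cases x i <;> cases u (i - 1) <;> cases u i <;>
    rfl

lemma measurable_modelA : Measurable fun p : (ℤ → Bool) × (ℤ → Bool) => modelA p.1 p.2 := by
  refine measurable_pi_lambda _ fun i => ?_
  exact (measurable_of_countable fun t : Bool × Bool × Bool =>
    if t.1 = t.2.1 then xor t.2.1 t.2.2 else t.1).comp
      (by fun_prop : Measurable fun p : (ℤ → Bool) × (ℤ → Bool) => (p.1 (i - 1), p.1 i, p.2 i))

lemma measurable_modelB : Measurable fun p : (ℤ → Bool) × (ℤ → Bool) => modelB p.1 p.2 := by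
  refine measurable_pi_lambda _ fun i => ?_
  exact (measurable_of_countable fun t : Bool × Bool × Bool × Bool =>
    match t.1, t.2.1 with
    | true, false => !t.2.2.1
    | false, true => t.2.2.2
    | true, true => t.2.2.1 == t.2.2.2
    | false, false => false).comp
      (by fun_prop : Measurable fun p : (ℤ → Bool) × (ℤ → Bool) =>
        (p.1 (i - 1), p.1 i, p.2 (i - 1), p.2 i))

lemma measurable_defects : Measurable defects := by
  unfold defects
  fun_prop

lemma defects_eq_emptyConfig_iff_forall {x : ℤ → Bool} :
    defects x = emptyConfig ↔ ∀ i, x i = !x (i - 1) := by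
  simp only [funext_iff, defects, emptyConfig]
  refine forall_congr' fun i => ?_
  cases x (i - 1) <;> cases x i <;> decide

lemma eq_of_defects_eq_emptyConfig {x y : ℤ → Bool} (hx : defects x = emptyConfig)
    (hy : defects y = emptyConfig) (h0 : x 0 = y 0) : x = y := by
  rw [defects_eq_emptyConfig_iff_forall] at hx hy
  funext i
  induction i using Int.induction_on with
  | zero => exact h0
  | succ k ih => rw [hx, hy, add_sub_cancel_right, ih]
  | pred k ih => rw [← Bool.not_inj_iff, ← hx, ← hy, ih]

lemma defects_conf01 : defects conf01 = emptyConfig := by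
  rw [defects_eq_emptyConfig_iff_forall]
  intro i
  simp only [conf01]
  by_cases hi : i % 2 = 1 <;> simp [hi] <;> omega

lemma defects_conf10 : defects conf10 = emptyConfig := by
  rw [defects_eq_emptyConfig_iff_forall]
  intro i
  simp only [conf10]
  by_cases hi : i % 2 = 0 <;> simp [hi] <;> omega

lemma defects_eq_emptyConfig_iff {x : ℤ → Bool} :
    defects x = emptyConfig ↔ x = conf01 ∨ x = conf10 := by
  refine ⟨fun hx => ?_, ?_⟩
  · cases h0 : x 0
    · exact .inl (eq_of_defects_eq_emptyConfig hx defects_conf01 (by rw [h0]; decide))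
    · exact .inr (eq_of_defects_eq_emptyConfig hx defects_conf10 (by rw [h0]; decide))
  · rintro (rfl | rfl)
    exacts [defects_conf01, defects_conf10]

lemma conf01_ne_conf10 : conf01 ≠ conf10 := fun h => by
  simpa [conf01, conf10] using congrFun h 0

lemma modelA_of_defects_eq_emptyConfig {x : ℤ → Bool} (hx : defects x = emptyConfig)
    (u : ℤ → Bool) : modelA x u = fun i => x (i - 1) := by
  funext i
  have hne : x (i - 1) ≠ x i := by
    rw [defects_eq_emptyConfig_iff_forall.mp hx i]
    exact Bool.self_ne_not _
  simp only [modelA, if_neg hne]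

lemma modelA_conf01 (u : ℤ → Bool) : modelA conf01 u = conf10 := by
  rw [modelA_of_defects_eq_emptyConfig defects_conf01]
  funext i
  simp only [conf01, conf10, decide_eq_decide]
  omega

lemma modelA_conf10 (u : ℤ → Bool) : modelA conf10 u = conf01 := by
  rw [modelA_of_defects_eq_emptyConfig defects_conf10]
  funext i
  simp only [conf01, conf10, decide_eq_decide]
  omega

section Measures

variable {lam : Measure (ℤ → Bool)}

lemma FA_add [SFinite lam] (μ ν : Measure (ℤ → Bool)) [SFinite μ] [SFinite ν] :
    FA lam (μ + ν) = FA lam μ + FA lam ν := by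
  rw [FA, Measure.add_prod, Measure.map_add _ _ measurable_modelA, FA, FA]

lemma FA_smul [SFinite lam] (c : ENNReal) (μ : Measure (ℤ → Bool)) :
    FA lam (c • μ) = c • FA lam μ := by
  rw [FA, Measure.prod_smul_left, Measure.map_smul, FA]

lemma FA_dirac [IsProbabilityMeasure lam] {x y : ℤ → Bool} (h : ∀ u, modelA x u = y) :
    FA lam (Measure.dirac x) = Measure.dirac y := by
  rw [FA, Measure.dirac_prod, Measure.map_map measurable_modelA measurable_prodMk_left]
  simp only [Function.comp_def, h, Measure.map_const, measure_univ, one_smul]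

lemma FA_smul_dirac_add [IsProbabilityMeasure lam] (p q : ENNReal) :
    FA lam (p • Measure.dirac conf01 + q • Measure.dirac conf10) =
      p • Measure.dirac conf10 + q • Measure.dirac conf01 := by
  rw [FA_add, FA_smul, FA_smul, FA_dirac modelA_conf01, FA_dirac modelA_conf10]

lemma FB_map_defects [SFinite lam] (μ : Measure (ℤ → Bool)) [SFinite μ] :
    FB lam (μ.map defects) = (FA lam μ).map defects := by
  rw [FB, ← Measure.map_id (μ := lam),
    Measure.map_prod_map μ lam measurable_defects measurable_id, Measure.map_id,
    Measure.map_map measurable_modelB (measurable_defects.prodMap measurable_id),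
    FA, Measure.map_map measurable_defects measurable_modelA]
  congr 1
  exact funext fun p => (defects_modelA p.1 p.2).symm

end Measures

lemma eq_of_isFixedPt_of_tendsto_integral {Ω : Type*} [MeasurableSpace Ω] [TopologicalSpace Ω]
    [HasOuterApproxClosed Ω] [BorelSpace Ω] {T : Measure Ω → Measure Ω} {ν ρ : Measure Ω}
    [IsFiniteMeasure ν] [IsFiniteMeasure ρ] (hν : T ν = ν)
    (h : ∀ f : BoundedContinuousFunction Ω ℝ,
      Tendsto (fun n : ℕ => ∫ x, f x ∂(T^[n] ν)) atTop (nhds (∫ x, f x ∂ρ))) :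
    ν = ρ := by
  refine ext_of_forall_integral_eq_of_IsFiniteMeasure fun f => ?_
  have hf := h f
  simp only [Function.iterate_fixed hν] at hf
  exact tendsto_nhds_unique tendsto_const_nhds hf

lemma exists_eq_smul_dirac_add_of_map_defects {μ : Measure (ℤ → Bool)}
    (h : μ.map defects = Measure.dirac emptyConfig) :
    ∃ p q : ENNReal, μ = p • Measure.dirac conf01 + q • Measure.dirac conf10 := by
  have hdefects : ∀ᵐ x ∂μ, defects x = emptyConfig := by
    refine ae_of_ae_map (p := (· = emptyConfig)) measurable_defects.aemeasurable ?_
    rw [h]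
    exact (ae_dirac_iff (measurableSet_singleton emptyConfig)).mpr rfl
  have hsupp : ∀ᵐ x ∂μ, x ∈ ({conf01} ∪ {conf10} : Set (ℤ → Bool)) :=
    hdefects.mono fun x hx => defects_eq_emptyConfig_iff.mp hx
  refine ⟨μ {conf01}, μ {conf10}, ?_⟩
  calc μ = μ.restrict ({conf01} ∪ {conf10}) := (Measure.restrict_eq_self_of_ae_mem hsupp).symm
    _ = μ {conf01} • Measure.dirac conf01 + μ {conf10} • Measure.dirac conf10 := by
      rw [Measure.restrict_union (Set.disjoint_singleton.mpr conf01_ne_conf10)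
        (measurableSet_singleton _), Measure.restrict_singleton, Measure.restrict_singleton]

/-- part of Lemma 4.3: if model B is ergodic with unique invariant
measure `δ_{∘^ℤ}` (i.e. `ν F_B^n` converges weakly to `δ_{∘^ℤ}` for every probability
measure `ν`), then `(δ_{(01)^ℤ} + δ_{(10)^ℤ})/2` is the unique invariant probability
measure of the PCA `F_A`. -/
theorem modelB_ergodic_implies_modelA_unique_invariant (lam : Measure (ℤ → Bool))
    (hlam : IsUniformProduct lam)
    (hB : ∀ ν : Measure (ℤ → Bool), IsProbabilityMeasure ν →
      ∀ f : BoundedContinuousFunction (ℤ → Bool) ℝ,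
        Tendsto (fun n : ℕ => ∫ x, f x ∂((FB lam)^[n] ν)) atTop
          (nhds (∫ x, f x ∂(Measure.dirac emptyConfig)))) :
    FA lam ((1 / 2 : ENNReal) • (Measure.dirac conf01 + Measure.dirac conf10)) =
      (1 / 2 : ENNReal) • (Measure.dirac conf01 + Measure.dirac conf10) ∧
    (∀ ν : Measure (ℤ → Bool), IsProbabilityMeasure ν → FA lam ν = ν →
      ν = (1 / 2 : ENNReal) • (Measure.dirac conf01 + Measure.dirac conf10)) := by
  have : IsProbabilityMeasure lam := hlam.1
  refine ⟨by rw [smul_add, FA_smul_dirac_add, add_comm], fun ν hν hinv => ?_⟩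
  have hfix : FB lam (ν.map defects) = ν.map defects := by rw [FB_map_defects, hinv]
  have hδ : ν.map defects = Measure.dirac emptyConfig :=
    eq_of_isFixedPt_of_tendsto_integral hfix
      (hB _ (Measure.isProbabilityMeasure_map measurable_defects.aemeasurable))
  obtain ⟨p, q, rfl⟩ := exists_eq_smul_dirac_add_of_map_defects hδ
  have hqp : q = p := by
    have h := congrArg (· {conf01}) (FA_smul_dirac_add (lam := lam) p q ▸ hinv)
    simpa [Measure.dirac_apply', conf01_ne_conf10, Ne.symm conf01_ne_conf10] using h
  have hp : p = 1 / 2 := by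
    have hsum := hν.measure_univ
    simp only [Measure.coe_add, Measure.coe_smul, Pi.add_apply, Pi.smul_apply, measure_univ,
      smul_eq_mul, mul_one, hqp, ← two_mul] at hsum
    rw [ENNReal.eq_div_iff two_ne_zero ENNReal.ofNat_ne_top, hsum]
  rw [hqp, hp, smul_add]
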